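/- arXiv:1208.0659 — 7 statements merged into one kernel-verified Lean document; each statement's English description precedes it below -/
import Mathlib

section
/- For weighted automata 𝒜 and ℬ over A and S and scalars α, β, γ, δ ∈ S, the diverging behavior of α𝒜γ + βℬδ equals the pointwise combination of the diverging behaviors: for every infinite word w and every n ∈ ℕ, (α𝒜γ + βℬδ)(w,n) = α·𝒜(w,n)·γ + β·ℬ(w,n)·δ. -/
open scoped Classical

/-- A weighted automaton over alphabet `A` and semiring `S`: a finite set of
states `Q`, initial distribution `I`, final distribution `F`, and a transition
matrix `M a` for each letter `a`. -/
structure WA (A : Type) (S : Type) [Semiring S] where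
  Q : Type
  [fin : Fintype Q]
  [deq : DecidableEq Q]
  I : Q → S
  F : Q → S
  M : A → Matrix Q Q S

attribute [instance] WA.fin WA.deq

variable {A S : Type} [Semiring S]

/-- The product `M(a₀)·…·M(a_{n−1})` over a finite word (identity for `[]`). -/
def Mword (𝒜 : WA A S) (w : List A) : Matrix 𝒜.Q 𝒜.Q S :=
  (w.map 𝒜.M).prod

/-- The converging behavior `⟦𝒜⟧(w) = Σ_{i,f} I(i)·M(w)_{i,f}·F(f)`. -/
def convB (𝒜 : WA A S) (w : List A) : S :=
  ∑ i, ∑ f, 𝒜.I i * Mword 𝒜 w i f * 𝒜.F f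

/-- The first `n` letters of an infinite word. -/
def wpre (w : ℕ → A) (n : ℕ) : List A := (List.range n).map w

/-- A pair of states `(i,f)` is activated by the infinite word `w` if for
every `n₀` there is `n ≥ n₀` with `M(w[0..n))_{i,f} ≠ 0`. -/
def Activated (𝒜 : WA A S) (w : ℕ → A) (i f : 𝒜.Q) : Prop :=
  ∀ n₀ : ℕ, ∃ n, n₀ ≤ n ∧ Mword 𝒜 (wpre w n) i f ≠ 0

/-- The diverging behavior `𝒜(w,n) = Σ_{(i,f) activated} I(i)·M(w[0..n))_{i,f}·F(f)`. -/
noncomputable def divB (𝒜 : WA A S) (w : ℕ → A) (n : ℕ) : S :=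
  ∑ p : 𝒜.Q × 𝒜.Q,
    if Activated 𝒜 w p.1 p.2 then
      𝒜.I p.1 * Mword 𝒜 (wpre w n) p.1 p.2 * 𝒜.F p.2
    else 0

/-- Product of converging power series: sum over all splittings of the word. -/
def cmul (x y : List A → S) : List A → S :=
  fun w => ∑ k ∈ Finset.range (w.length + 1), x (w.take k) * y (w.drop k)

/-- The multiplicative unit: 1 on the empty word, 0 elsewhere. -/
def cone : List A → S := fun w => match w with | [] => 1 | _ => 0

/-- Powers of a converging power series. -/
def cpow (x : List A → S) : ℕ → (List A → S)
  | 0 => cone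
  | n + 1 => cmul x (cpow x n)

/-- The star `x* = Σ_{k ≥ 0} x^k`; for proper `x` only the terms with
`k ≤ |w|` can contribute on the word `w`. -/
def cstar (x : List A → S) : List A → S :=
  fun w => ∑ k ∈ Finset.range (w.length + 1), cpow x k w

/-- `Rat*(S,A)`: the smallest set of converging power series containing all
finitely supported ones and closed under sum, product, and star of proper
members. -/
inductive IsRat : (List A → S) → Prop
  | finite (x : List A → S) (h : (Function.support x).Finite) : IsRat x
  | add {x y : List A → S} : IsRat x → IsRat y → IsRat (x + y)
  | mul {x y : List A → S} : IsRat x → IsRat y → IsRat (cmul x y)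
  | star {x : List A → S} : IsRat x → x [] = 0 → IsRat (cstar x)

/-- `χ(w,x) = 1` iff arbitrarily long prefixes of `w` have nonzero coefficient. -/
noncomputable def chi (w : ℕ → A) (x : List A → S) : S :=
  if ∀ n₀ : ℕ, ∃ n, n₀ ≤ n ∧ x (wpre w n) ≠ 0 then 1 else 0

/-- `s^ω(w,n) = s*(w[0..n))·χ(w,s*)`. -/
noncomputable def omegaPS (s : List A → S) : (ℕ → A) → ℕ → S :=
  fun w n => cstar s (wpre w n) * chi w (cstar s)

/-- The conjoin `(x ⋆ y)(w,n) = (x·y*)(w[0..n))·χ(w,x·y*)`. -/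
noncomputable def conjoinPS (x y : List A → S) : (ℕ → A) → ℕ → S :=
  fun w n => cmul x (cstar y) (wpre w n) * chi w (cmul x (cstar y))

/-- `Rat^ω(S,A)`: the smallest set of diverging power series closed under
finite sums and left/right scalar multiplication containing all `x ⋆ y` and
`z^ω` for proper rational `x`, `y`, `z`. -/
inductive IsRatOmega : ((ℕ → A) → ℕ → S) → Prop
  | zero : IsRatOmega (fun _ _ => 0)
  | add {p q : (ℕ → A) → ℕ → S} :
      IsRatOmega p → IsRatOmega q → IsRatOmega (fun w n => p w n + q w n)
  | smul_left (s : S) {p : (ℕ → A) → ℕ → S} :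
      IsRatOmega p → IsRatOmega (fun w n => s * p w n)
  | smul_right (s : S) {p : (ℕ → A) → ℕ → S} :
      IsRatOmega p → IsRatOmega (fun w n => p w n * s)
  | conjoin {x y : List A → S} :
      IsRat x → x [] = 0 → IsRat y → y [] = 0 → IsRatOmega (conjoinPS x y)
  | omega {z : List A → S} : IsRat z → z [] = 0 → IsRatOmega (omegaPS z)

/-- Scalar multiples `l·𝒜·r` of an automaton. -/
def smulWA (l : S) (𝒜 : WA A S) (r : S) : WA A S where
  Q := 𝒜.Q
  I := fun i => l * 𝒜.I i
  F := fun f => 𝒜.F f * r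
  M := 𝒜.M

/-- The disjoint-union (sum) automaton. -/
def addWA (𝒜 ℬ : WA A S) : WA A S where
  Q := 𝒜.Q ⊕ ℬ.Q
  I := Sum.elim 𝒜.I ℬ.I
  F := Sum.elim 𝒜.F ℬ.F
  M := fun a => Matrix.fromBlocks (𝒜.M a) 0 0 (ℬ.M a)

/-- `𝒜` is normalized with initial state `qI` and final state `qF`. -/
def IsNormalizedAt (𝒜 : WA A S) (qI qF : 𝒜.Q) : Prop :=
  qI ≠ qF ∧ (∀ i, 𝒜.I i = if i = qI then 1 else 0) ∧
    (∀ f, 𝒜.F f = if f = qF then 1 else 0) ∧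
    (∀ (a : A) (i : 𝒜.Q), 𝒜.M a i qI = 0) ∧ (∀ (a : A) (j : 𝒜.Q), 𝒜.M a qF j = 0)

/-- `𝒜` is normalized. -/
def IsNormalized (𝒜 : WA A S) : Prop := ∃ qI qF, IsNormalizedAt 𝒜 qI qF

/-- `𝒜` is a loopback automaton with loopback state `q₀`. -/
def IsLoopbackAt (𝒜 : WA A S) (q₀ : 𝒜.Q) : Prop :=
  (∀ i, 𝒜.I i = if i = q₀ then 1 else 0) ∧ (∀ f, 𝒜.F f = if f = q₀ then 1 else 0)

/-- `𝒜` is a loopback automaton. -/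
def IsLoopback (𝒜 : WA A S) : Prop := ∃ q₀, IsLoopbackAt 𝒜 q₀

/-- `𝒜` is a loopback automaton with prelude. -/
def IsLoopbackWithPrelude (𝒜 : WA A S) : Prop :=
  ∃ qI qF, qI ≠ qF ∧ (∀ i, 𝒜.I i = if i = qI then 1 else 0) ∧
    (∀ f, 𝒜.F f = if f = qF then 1 else 0) ∧
    (∀ (a : A) (i : 𝒜.Q), 𝒜.M a i qI = 0)

/-- `𝒜` is a bridge automaton. -/
def IsBridge (𝒜 : WA A S) : Prop :=
  ∃ qI qF, qI ≠ qF ∧ (∀ i, 𝒜.I i = if i = qI then 1 else 0) ∧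
    (∀ f, 𝒜.F f = if f = qF then 1 else 0)

/-- The unroll of a loopback automaton with loopback state `q₀`: adjoin a
fresh final state, redirect all edges ending at `q₀` to it. -/
def unroll (L : WA A S) (q₀ : L.Q) : WA A S where
  Q := L.Q ⊕ Unit
  I := Sum.elim (fun i => if i = q₀ then 1 else 0) (fun _ => 0)
  F := Sum.elim (fun _ => 0) (fun _ => 1)
  M := fun a => Matrix.of fun p q =>
    match p, q with
    | Sum.inl i, Sum.inl j => if j = q₀ then 0 else L.M a i j
    | Sum.inl i, Sum.inr _ => L.M a i q₀
    | Sum.inr _, _ => 0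

/-- The conjoin `X ⋆ Y` of two normalized automata (initial/final states
`xI`, `xF` and `yI`, `yF`): the disjoint sum of `X` minus its final state and
the roll of `Y`, with edges of `X` ending at `xF` redirected to the loopback
state `yI`. -/
def conjoinWA (X : WA A S) (xI xF : X.Q) (Y : WA A S) (yI yF : Y.Q) : WA A S where
  Q := {i : X.Q // i ≠ xF} ⊕ {j : Y.Q // j ≠ yF}
  I := Sum.elim (fun i => if i.1 = xI then 1 else 0) (fun _ => 0)
  F := Sum.elim (fun _ => 0) (fun j => if j.1 = yI then 1 else 0)
  M := fun a => Matrix.of fun p q =>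
    match p, q with
    | Sum.inl i, Sum.inl j => X.M a i.1 j.1
    | Sum.inl i, Sum.inr j => if j.1 = yI then X.M a i.1 xF else 0
    | Sum.inr _, Sum.inl _ => 0
    | Sum.inr i, Sum.inr j => if j.1 = yI then Y.M a i.1 yF else Y.M a i.1 j.1

/-- The finite slice `w[i..j)` of a biinfinite word. -/
def bpre (w : ℤ → A) (i j : ℤ) : List A :=
  (List.range (j - i).toNat).map (fun k => w (i + k))

/-- A pair of states `(p,q)` is activated by the biinfinite word `w` if for
all `i₀ ≤ j₀` there are `i ≤ i₀` and `j ≥ j₀` with `M(w[i..j))_{p,q} ≠ 0`. -/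
def BActivated (𝒜 : WA A S) (w : ℤ → A) (p q : 𝒜.Q) : Prop :=
  ∀ i₀ j₀ : ℤ, i₀ ≤ j₀ → ∃ i ≤ i₀, ∃ j, j₀ ≤ j ∧ Mword 𝒜 (bpre w i j) p q ≠ 0

/-- The bidiverging behavior
`𝒜(w,i,n) = Σ_{(p,q) activated} I(p)·M(w[i..i+n))_{p,q}·F(q)`. -/
noncomputable def bdivB (𝒜 : WA A S) (w : ℤ → A) (i : ℤ) (n : ℕ) : S :=
  ∑ p : 𝒜.Q × 𝒜.Q,
    if BActivated 𝒜 w p.1 p.2 then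
      𝒜.I p.1 * Mword 𝒜 (bpre w i (i + n)) p.1 p.2 * 𝒜.F p.2
    else 0

/-- `χ_ζ(w,x) = 1` iff arbitrarily long slices of `w` have nonzero coefficient. -/
noncomputable def chiZ (w : ℤ → A) (x : List A → S) : S :=
  if ∀ i₀ j₀ : ℤ, i₀ ≤ j₀ → ∃ i ≤ i₀, ∃ j, j₀ ≤ j ∧ x (bpre w i j) ≠ 0 then 1 else 0

/-- `s^ζ(w,i,n) = s*(w[i..i+n))·χ_ζ(w,s*)`. -/
noncomputable def zetaPS (s : List A → S) : (ℤ → A) → ℤ → ℕ → S :=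
  fun w i n => cstar s (bpre w i (i + n)) * chiZ w (cstar s)

/-- The conjoin `(x ⋆ m ⋆ y)(w,i,n) = (x*·m·y*)(w[i..i+n))·χ_ζ(w,x*·m·y*)`. -/
noncomputable def conjoin3PS (x m y : List A → S) : (ℤ → A) → ℤ → ℕ → S :=
  fun w i n =>
    cmul (cstar x) (cmul m (cstar y)) (bpre w i (i + n)) *
      chiZ w (cmul (cstar x) (cmul m (cstar y)))

/-- `Rat^ζ(S,A)`: the smallest set of bidiverging power series closed under
finite sums and left/right scalar multiplication containing all `x ⋆ m ⋆ y`
and `z^ζ` for proper rational `x`, `m`, `y`, `z`. -/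
inductive IsRatZeta : ((ℤ → A) → ℤ → ℕ → S) → Prop
  | zero : IsRatZeta (fun _ _ _ => 0)
  | add {p q : (ℤ → A) → ℤ → ℕ → S} :
      IsRatZeta p → IsRatZeta q → IsRatZeta (fun w i n => p w i n + q w i n)
  | smul_left (s : S) {p : (ℤ → A) → ℤ → ℕ → S} :
      IsRatZeta p → IsRatZeta (fun w i n => s * p w i n)
  | smul_right (s : S) {p : (ℤ → A) → ℤ → ℕ → S} :
      IsRatZeta p → IsRatZeta (fun w i n => p w i n * s)
  | conjoin {x m y : List A → S} :
      IsRat x → x [] = 0 → IsRat m → m [] = 0 → IsRat y → y [] = 0 →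
      IsRatZeta (conjoin3PS x m y)
  | zeta {z : List A → S} : IsRat z → z [] = 0 → IsRatZeta (zetaPS z)

/-- The conjoin `X ⋆ M̂ ⋆ Y` of three normalized automata: the roll of `X`
(loopback `xI`), the middle of `M̂`, and the roll of `Y` (loopback `yI`), with
the edges of `M̂` leaving `mI` re-sourced at `xI`, the edges of `M̂` entering
`mF` re-targeted at `yI`, and direct `mI → mF` edges becoming `xI → yI`. -/
def conjoin3WA (X : WA A S) (xI xF : X.Q) (Mh : WA A S) (mI mF : Mh.Q)
    (Y : WA A S) (yI yF : Y.Q) : WA A S where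
  Q := {i : X.Q // i ≠ xF} ⊕ ({k : Mh.Q // k ≠ mI ∧ k ≠ mF} ⊕ {j : Y.Q // j ≠ yF})
  I := Sum.elim (fun i => if i.1 = xI then 1 else 0) (fun _ => 0)
  F := Sum.elim (fun _ => 0) (Sum.elim (fun _ => 0) (fun j => if j.1 = yI then 1 else 0))
  M := fun a => Matrix.of fun p q =>
    match p, q with
    | Sum.inl i, Sum.inl j => if j.1 = xI then X.M a i.1 xF else X.M a i.1 j.1
    | Sum.inl i, Sum.inr (Sum.inl k) => if i.1 = xI then Mh.M a mI k.1 else 0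
    | Sum.inl i, Sum.inr (Sum.inr j) =>
        if i.1 = xI ∧ j.1 = yI then Mh.M a mI mF else 0
    | Sum.inr (Sum.inl _), Sum.inl _ => 0
    | Sum.inr (Sum.inl k), Sum.inr (Sum.inl l) => Mh.M a k.1 l.1
    | Sum.inr (Sum.inl k), Sum.inr (Sum.inr j) => if j.1 = yI then Mh.M a k.1 mF else 0
    | Sum.inr (Sum.inr _), Sum.inl _ => 0
    | Sum.inr (Sum.inr _), Sum.inr (Sum.inl _) => 0
    | Sum.inr (Sum.inr i), Sum.inr (Sum.inr j) =>
        if j.1 = yI then Y.M a i.1 yF else Y.M a i.1 j.1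

theorem Matrix.prod_map_fromBlocks_zero {ι R m n : Type} [Fintype m] [Fintype n]
    [DecidableEq m] [DecidableEq n] [Semiring R]
    (f : ι → Matrix m m R) (g : ι → Matrix n n R) (l : List ι) :
    (l.map fun a => Matrix.fromBlocks (f a) 0 0 (g a)).prod
      = Matrix.fromBlocks (l.map f).prod 0 0 (l.map g).prod := by
  induction l with
  | nil => simp [Matrix.fromBlocks_one]
  | cons a l ih => simp [ih, Matrix.fromBlocks_multiply]

section

variable {A S : Type} [Semiring S]

theorem Mword_addWA (𝒜 ℬ : WA A S) (w : List A) :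
    Mword (addWA 𝒜 ℬ) w = Matrix.fromBlocks (Mword 𝒜 w) 0 0 (Mword ℬ w) :=
  Matrix.prod_map_fromBlocks_zero 𝒜.M ℬ.M w

theorem activated_addWA_inl_inl (𝒜 ℬ : WA A S) (w : ℕ → A) (i f : 𝒜.Q) :
    Activated (addWA 𝒜 ℬ) w (Sum.inl i) (Sum.inl f) ↔ Activated 𝒜 w i f := by
  simp only [Activated, Mword_addWA, Matrix.fromBlocks_apply₁₁]

theorem activated_addWA_inr_inr (𝒜 ℬ : WA A S) (w : ℕ → A) (i f : ℬ.Q) :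
    Activated (addWA 𝒜 ℬ) w (Sum.inr i) (Sum.inr f) ↔ Activated ℬ w i f := by
  simp only [Activated, Mword_addWA, Matrix.fromBlocks_apply₂₂]

theorem divB_eq_sum_sum (𝒜 : WA A S) (w : ℕ → A) (n : ℕ) :
    divB 𝒜 w n = ∑ i, ∑ f,
      if Activated 𝒜 w i f then 𝒜.I i * Mword 𝒜 (wpre w n) i f * 𝒜.F f else 0 :=
  Fintype.sum_prod_type _

/-- The off-diagonal blocks vanish term by term, whether or not the pair is activated. -/
theorem divB_addWA (𝒜 ℬ : WA A S) (w : ℕ → A) (n : ℕ) :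
    divB (addWA 𝒜 ℬ) w n = divB 𝒜 w n + divB ℬ w n := by
  rw [divB_eq_sum_sum, divB_eq_sum_sum 𝒜, divB_eq_sum_sum ℬ]
  change ∑ i : 𝒜.Q ⊕ ℬ.Q, ∑ f : 𝒜.Q ⊕ ℬ.Q, _ = _
  simp only [Fintype.sum_sum_type, activated_addWA_inl_inl, activated_addWA_inr_inr,
    Mword_addWA, Matrix.fromBlocks_apply₁₁, Matrix.fromBlocks_apply₁₂,
    Matrix.fromBlocks_apply₂₁, Matrix.fromBlocks_apply₂₂, Matrix.zero_apply,
    mul_zero, zero_mul, ite_self, Finset.sum_const_zero, add_zero, zero_add]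
  rfl

theorem divB_smulWA (l : S) (𝒜 : WA A S) (r : S) (w : ℕ → A) (n : ℕ) :
    divB (smulWA l 𝒜 r) w n = l * divB 𝒜 w n * r := by
  rw [divB, divB, Finset.mul_sum, Finset.sum_mul]
  refine Finset.sum_congr rfl fun p _ => ?_
  change (if Activated 𝒜 w p.1 p.2 then l * 𝒜.I p.1 * Mword 𝒜 (wpre w n) p.1 p.2 * (𝒜.F p.2 * r)
    else 0) = _
  split_ifs <;> simp only [mul_assoc, mul_zero, zero_mul]

end

/-- the diverging behavior is a bimodule homomorphism. -/
theorem divB_is_homomorphism (A S : Type) [Semiring S] (𝒜 ℬ : WA A S)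
    (α β γ δ : S) :
    ∀ (w : ℕ → A) (n : ℕ),
      divB (addWA (smulWA α 𝒜 γ) (smulWA β ℬ δ)) w n
        = α * divB 𝒜 w n * γ + β * divB ℬ w n * δ := by
  intro w n
  rw [divB_addWA, divB_smulWA, divB_smulWA]
end

section
/- For every weighted automaton 𝒜 over A and S whose converging behavior assigns 0 to the empty word, there exists a normalized automaton N with the same converging behavior: ⟦N⟧ = ⟦𝒜⟧. -/
/-!
Adjoin two fresh states `q_I` and `q_F` and set `M'(a) = E · M(a) · P`, where `E` extends the
identity by a row `I` (for `q_I`) and a zero row (for `q_F`), and `P` extends the identity by a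
zero column (for `q_I`) and a column `F` (for `q_F`). Since `P · E = 1`, the products telescope
to `M'(w) = E · M(w) · P` for every nonempty word `w`, whose `(q_I, q_F)` entry is `⟦𝒜⟧(w)`;
on the empty word `M'(w) = 1` gives `0 = ⟦𝒜⟧([])`.
-/

open scoped Classical

variable {A S : Type} [Semiring S]

namespace Matrix

variable {m n R : Type*} [Fintype m] [Fintype n] [DecidableEq m] [DecidableEq n] [Semiring R]

theorem prod_map_mul_mul_of_mul_eq_one (E : Matrix n m R) (P : Matrix m n R) (hPE : P * E = 1)
    {l : List (Matrix m m R)} (hl : l ≠ []) :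
    (l.map fun X => E * X * P).prod = E * l.prod * P := by
  induction l with
  | nil => exact absurd rfl hl
  | cons X l ih =>
    rcases eq_or_ne l [] with rfl | hl'
    · simp
    · rw [List.map_cons, List.prod_cons, ih hl', List.prod_cons]
      calc E * X * P * (E * l.prod * P) = E * X * (P * E) * l.prod * P := by
            simp only [Matrix.mul_assoc]
        _ = E * (X * l.prod) * P := by rw [hPE, Matrix.mul_one, Matrix.mul_assoc E]

end Matrix

theorem convB_eq_Mword_apply (𝒜 : WA A S) {qI qF : 𝒜.Q}
    (hI : ∀ i, 𝒜.I i = if i = qI then 1 else 0) (hF : ∀ f, 𝒜.F f = if f = qF then 1 else 0)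
    (w : List A) : convB 𝒜 w = Mword 𝒜 w qI qF := by
  simp [convB, hI, hF]

namespace WA

def normalizeRows (𝒜 : WA A S) : Matrix (𝒜.Q ⊕ Bool) 𝒜.Q S :=
  Matrix.fromRows 1 (Matrix.of fun b j => if b then 0 else 𝒜.I j)

def normalizeCols (𝒜 : WA A S) : Matrix 𝒜.Q (𝒜.Q ⊕ Bool) S :=
  Matrix.fromCols 1 (Matrix.of fun i b => if b then 𝒜.F i else 0)

abbrev normalize (𝒜 : WA A S) : WA A S where
  Q := 𝒜.Q ⊕ Bool
  I q := if q = Sum.inr false then 1 else 0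
  F q := if q = Sum.inr true then 1 else 0
  M a := 𝒜.normalizeRows * 𝒜.M a * 𝒜.normalizeCols

theorem normalizeCols_mul_normalizeRows (𝒜 : WA A S) :
    𝒜.normalizeCols * 𝒜.normalizeRows = 1 := by
  ext i j
  simp [normalizeCols, normalizeRows, Matrix.mul_apply, Matrix.one_apply]

theorem normalize_isNormalizedAt (𝒜 : WA A S) :
    IsNormalizedAt 𝒜.normalize (Sum.inr false) (Sum.inr true) := by
  refine ⟨(by simp : (Sum.inr false : 𝒜.Q ⊕ Bool) ≠ Sum.inr true), fun _ => rfl, fun _ => rfl,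
    fun a i => ?_, fun a j => ?_⟩
  · simp [Matrix.mul_apply, normalizeCols]
  · simp [Matrix.mul_apply, normalizeRows]

theorem Mword_normalize (𝒜 : WA A S) {w : List A} (hw : w ≠ []) :
    Mword 𝒜.normalize w = 𝒜.normalizeRows * Mword 𝒜 w * 𝒜.normalizeCols := by
  have hM : 𝒜.normalize.M = (fun X => 𝒜.normalizeRows * X * 𝒜.normalizeCols) ∘ 𝒜.M := rfl
  rw [Mword, Mword, hM, ← List.map_map]
  exact Matrix.prod_map_mul_mul_of_mul_eq_one _ _ 𝒜.normalizeCols_mul_normalizeRows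
    (mt List.map_eq_nil_iff.mp hw)

theorem normalizeRows_mul_mul_normalizeCols_apply (𝒜 : WA A S) (X : Matrix 𝒜.Q 𝒜.Q S) :
    (𝒜.normalizeRows * X * 𝒜.normalizeCols) (Sum.inr false) (Sum.inr true)
      = ∑ i, ∑ f, 𝒜.I i * X i f * 𝒜.F f := by
  simp only [normalizeRows, normalizeCols, Matrix.fromRows_mul, Matrix.fromRows_apply_inr,
    Matrix.fromCols_apply_inr, Matrix.mul_apply, Matrix.of_apply, Bool.false_eq_true, if_true,
    if_false, Finset.sum_mul]
  exact Finset.sum_comm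

end WA

/-- every automaton rejecting the empty word has an equivalent
normalized automaton. -/
theorem exists_normalized (A S : Type) [Semiring S] (𝒜 : WA A S)
    (h : convB 𝒜 [] = 0) :
    ∃ N : WA A S, IsNormalized N ∧ ∀ w : List A, convB N w = convB 𝒜 w := by
  have hN := 𝒜.normalize_isNormalizedAt
  refine ⟨𝒜.normalize, ⟨_, _, hN⟩, fun w => ?_⟩
  rw [convB_eq_Mword_apply _ hN.2.1 hN.2.2.1]
  rcases eq_or_ne w [] with rfl | hw
  · simp [Mword, h]
  · rw [WA.Mword_normalize 𝒜 hw, WA.normalizeRows_mul_mul_normalizeCols_apply, convB]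
end

section
/- Let L be a loopback automaton over A and S and let s := ⟦N⟧ be the converging behavior of its unroll N (s is proper since N is normalized). Then the converging behavior of L equals the star of s: for every finite word w, ⟦L⟧(w) = s*(w). -/
open scoped Classical

variable {A S : Type} [Semiring S]

/-! A word read by the loopback automaton from `q₀` back to `q₀` splits uniquely at its first
return to `q₀`: the prefix up to that return is a run of the unroll from `q₀` to its fresh final
state, and the rest is again a loop at `q₀`. Hence `x := ⟦L⟧` satisfies `x = 1 + s·x` with
`s := ⟦unroll L q₀⟧` proper, and for proper `s` the star `s*` is the only solution of this
equation, since `(s·x)(w)` only involves values of `x` on words shorter than `w`. -/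

section PowerSeries

@[simp] lemma cone_nil : (cone ([] : List A) : S) = 1 := rfl

@[simp] lemma cone_cons (a : A) (w : List A) : (cone (a :: w) : S) = 0 := rfl

lemma cmul_cons (x y : List A → S) (a : A) (w : List A) :
    cmul x y (a :: w) = x [] * y (a :: w) + cmul (fun u => x (a :: u)) y w := by
  rw [cmul, List.length_cons, Finset.sum_range_succ', add_comm]
  simp [cmul]

lemma cone_cmul (y : List A → S) : cmul cone y = y := by
  funext w
  cases w with
  | nil => simp [cmul]
  | cons a w =>
    rw [cmul_cons]
    simp [cmul]

lemma cmul_sum_mul_left {ι : Type*} [Fintype ι] (c : ι → S) (f : ι → List A → S)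
    (y : List A → S) (w : List A) :
    cmul (fun u => ∑ r, c r * f r u) y w = ∑ r, c r * cmul (f r) y w := by
  simp only [cmul, Finset.sum_mul, Finset.mul_sum, mul_assoc]
  exact Finset.sum_comm

lemma cmul_sum_right (x : List A → S) (f : ℕ → List A → S) (t : Finset ℕ) (w : List A) :
    cmul x (fun u => ∑ k ∈ t, f k u) w = ∑ k ∈ t, cmul x (f k) w := by
  simp only [cmul, Finset.mul_sum]
  exact Finset.sum_comm

lemma cmul_congr_right_of_proper {x y z : List A → S} (hx : x [] = 0) {w : List A}
    (h : ∀ u : List A, u.length < w.length → y u = z u) : cmul x y w = cmul x z w := by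
  refine Finset.sum_congr rfl fun k hk => ?_
  rcases k.eq_zero_or_pos with rfl | hk0
  · simp [hx]
  · rw [h]
    simp only [Finset.mem_range] at hk
    simp only [List.length_drop]
    omega

lemma cpow_eq_zero_of_length_lt {s : List A → S} (hs : s [] = 0) :
    ∀ {k : ℕ} {w : List A}, w.length < k → cpow s k w = 0
  | 0, _, h => absurd h (Nat.not_lt_zero _)
  | k + 1, w, h => by
    simp only [cpow, cmul]
    refine Finset.sum_eq_zero fun j hj => ?_
    rcases j.eq_zero_or_pos with rfl | hj0
    · simp [hs]
    · simp only [Finset.mem_range] at hj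
      rw [cpow_eq_zero_of_length_lt hs (by simp only [List.length_drop]; omega), mul_zero]

lemma cstar_eq_sum_range {s : List A → S} (hs : s [] = 0) {w : List A} {n : ℕ}
    (hn : w.length < n) : cstar s w = ∑ k ∈ Finset.range n, cpow s k w :=
  Finset.sum_subset (Finset.range_subset_range.2 hn) fun _ _ hk =>
    cpow_eq_zero_of_length_lt hs (by simpa using hk)

lemma cstar_eq_cone_add_cmul {s : List A → S} (hs : s [] = 0) (w : List A) :
    cstar s w = cone w + cmul s (cstar s) w := by
  rw [cstar_eq_sum_range hs (Nat.lt_succ_of_lt w.length.lt_succ_self), Finset.sum_range_succ',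
    add_comm]
  simp only [cpow]
  rw [← cmul_sum_right]
  refine congrArg _ (Finset.sum_congr rfl fun j _ => congrArg _ ?_)
  exact (cstar_eq_sum_range hs (by simp only [List.length_drop]; omega)).symm

theorem eq_cstar_of_eq_cone_add_cmul {s y : List A → S} (hs : s [] = 0)
    (hy : ∀ w, y w = cone w + cmul s y w) (w : List A) : y w = cstar s w := by
  rw [hy, cstar_eq_cone_add_cmul hs]
  exact congrArg _ <| cmul_congr_right_of_proper hs fun u hu =>
    eq_cstar_of_eq_cone_add_cmul hs hy u
termination_by w.length

end PowerSeries

section Automata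

lemma Mword_nil_apply (𝒜 : WA A S) (p q : 𝒜.Q) :
    Mword 𝒜 [] p q = if p = q then 1 else 0 := by
  simp [Mword, Matrix.one_apply]

lemma Mword_cons_apply (𝒜 : WA A S) (a : A) (w : List A) (p q : 𝒜.Q) :
    Mword 𝒜 (a :: w) p q = ∑ r, 𝒜.M a p r * Mword 𝒜 w r q := by
  simp [Mword, Matrix.mul_apply]

lemma convB_eq_Mword_of_indicator (𝒜 : WA A S) {p q : 𝒜.Q}
    (hI : ∀ i, 𝒜.I i = if i = p then 1 else 0) (hF : ∀ f, 𝒜.F f = if f = q then 1 else 0)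
    (w : List A) : convB 𝒜 w = Mword 𝒜 w p q := by
  simp [convB, hI, hF, ite_mul, mul_ite, Finset.sum_ite_eq']

variable (L : WA A S) (q₀ : L.Q)

/- Bare `Sum.inl i` and `Sum.inr ()` only typecheck as states of `unroll L q₀` after unfolding
`unroll`, which defeats rewriting with the general lemmas on automata. -/
def unrollInl (i : L.Q) : (unroll L q₀).Q := Sum.inl i

def unrollFinal : (unroll L q₀).Q := Sum.inr ()

lemma unrollInl_ne_unrollFinal (i : L.Q) : unrollInl L q₀ i ≠ unrollFinal L q₀ :=
  Sum.inl_ne_inr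

lemma sum_unroll_Q (f : (unroll L q₀).Q → S) :
    ∑ q, f q = ∑ j, f (unrollInl L q₀ j) + f (unrollFinal L q₀) :=
  (Fintype.sum_sum_type (α₁ := L.Q) (α₂ := Unit) f).trans (by simp [unrollInl, unrollFinal])

lemma unroll_M_inl_inl (a : A) (i j : L.Q) :
    (unroll L q₀).M a (unrollInl L q₀ i) (unrollInl L q₀ j) = if j = q₀ then 0 else L.M a i j :=
  rfl

lemma unroll_M_inl_final (a : A) (i : L.Q) :
    (unroll L q₀).M a (unrollInl L q₀ i) (unrollFinal L q₀) = L.M a i q₀ :=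
  rfl

lemma unroll_M_final (a : A) (q : (unroll L q₀).Q) : (unroll L q₀).M a (unrollFinal L q₀) q = 0 :=
  rfl

lemma convB_unroll (w : List A) :
    convB (unroll L q₀) w = Mword (unroll L q₀) w (unrollInl L q₀ q₀) (unrollFinal L q₀) := by
  apply convB_eq_Mword_of_indicator
  · rintro (i | ⟨⟩) <;> simp [unroll, unrollInl]
  · rintro (f | ⟨⟩) <;> simp [unroll, unrollFinal]

lemma convB_unroll_nil : convB (unroll L q₀) [] = 0 := by
  rw [convB_unroll, Mword_nil_apply, if_neg (unrollInl_ne_unrollFinal L q₀ q₀)]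

lemma Mword_unroll_final (w : List A) :
    Mword (unroll L q₀) w (unrollFinal L q₀) (unrollFinal L q₀) = cone w := by
  cases w with
  | nil => rw [Mword_nil_apply, if_pos rfl, cone_nil]
  | cons a w =>
    rw [Mword_cons_apply, cone_cons]
    exact Finset.sum_eq_zero fun q _ => by rw [unroll_M_final, zero_mul]

/- The first letter leads either into the final state, from which the unroll reads nothing more,
or to a state `j ≠ q₀`. -/
lemma cmul_unroll_cons (y : List A → S) (a : A) (w : List A) (i : L.Q) :
    cmul (fun u => Mword (unroll L q₀) u (unrollInl L q₀ i) (unrollFinal L q₀)) y (a :: w) =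
      L.M a i q₀ * y w + ∑ j, (if j = q₀ then 0 else L.M a i j) *
        cmul (fun u => Mword (unroll L q₀) u (unrollInl L q₀ j) (unrollFinal L q₀)) y w := by
  rw [cmul_cons, Mword_nil_apply, if_neg (unrollInl_ne_unrollFinal L q₀ i), zero_mul, zero_add]
  simp only [Mword_cons_apply]
  rw [cmul_sum_mul_left, sum_unroll_Q, add_comm]
  simp only [unroll_M_inl_inl, unroll_M_inl_final, Mword_unroll_final, cone_cmul]

lemma Mword_eq_cone_add_cmul_unroll (w : List A) (i : L.Q) :
    Mword L w i q₀ = (if i = q₀ then cone w else 0) +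
      cmul (fun u => Mword (unroll L q₀) u (unrollInl L q₀ i) (unrollFinal L q₀))
        (fun u => Mword L u q₀ q₀) w := by
  induction w generalizing i with
  | nil => simp [Mword_nil_apply, cmul, unrollInl_ne_unrollFinal]
  | cons a w ih =>
    rw [cmul_unroll_cons, Mword_cons_apply, cone_cons, ite_self, zero_add,
      ← Finset.add_sum_erase _ _ (Finset.mem_univ q₀),
      ← Finset.add_sum_erase _ _ (Finset.mem_univ q₀), if_pos rfl, zero_mul, zero_add]
    congr 1
    refine Finset.sum_congr rfl fun j hj => ?_
    have hj : j ≠ q₀ := Finset.ne_of_mem_erase hj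
    rw [if_neg hj, ih j, if_neg hj, zero_add]

end Automata

/-- the converging behavior of a loopback automaton is the star
of the behavior of its unroll. -/
theorem loopback_convB_eq_star_unroll (A S : Type) [Semiring S] (L : WA A S)
    (q₀ : L.Q) (hL : IsLoopbackAt L q₀) :
    ∀ w : List A, convB L w = cstar (convB (unroll L q₀)) w := by
  have hx : convB L = fun u => Mword L u q₀ q₀ :=
    funext (convB_eq_Mword_of_indicator L hL.1 hL.2)
  have hs : convB (unroll L q₀) =
      fun u => Mword (unroll L q₀) u (unrollInl L q₀ q₀) (unrollFinal L q₀) :=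
    funext (convB_unroll L q₀)
  refine eq_cstar_of_eq_cone_add_cmul (convB_unroll_nil L q₀) fun w => ?_
  rw [hx, hs]
  have hsplit := Mword_eq_cone_add_cmul_unroll L q₀ w q₀
  rwa [if_pos rfl] at hsplit
end

section
/- Let L be a loopback automaton over A and S whose converging behavior equals s* for some proper converging power series s. Then the diverging behavior of L equals s^ω: for every infinite word w and every n ∈ ℕ, L(w,n) = s*(w[0..n))·χ(w,s*). -/
open scoped Classical

variable {A S : Type} [Semiring S]

/-- a loopback automaton whose converging behavior is `s*` has
diverging behavior `s^ω`. -/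
theorem loopback_divB_eq_omega (A S : Type) [Semiring S] (L : WA A S)
    (hL : IsLoopback L) (s : List A → S) (hs : s [] = 0)
    (hB : ∀ w : List A, convB L w = cstar s w) :
    ∀ (w : ℕ → A) (n : ℕ), divB L w n = cstar s (wpre w n) * chi w (cstar s) := by
  obtain ⟨q₀, hI, hF⟩ := hL
  have hM : ∀ u : List A, Mword L u q₀ q₀ = cstar s u := by
    intro u
    have := hB u
    unfold convB at this
    simpa [hI, hF, ite_mul, mul_ite, Finset.sum_ite_eq'] using this
  intro w n
  have hAct : Activated L w q₀ q₀ ↔ ∀ n₀ : ℕ, ∃ n, n₀ ≤ n ∧ cstar s (wpre w n) ≠ 0 := by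
    unfold Activated
    simp [hM]
  unfold divB chi
  rw [Finset.sum_eq_single (q₀, q₀)]
  · by_cases h : Activated L w q₀ q₀
    · rw [if_pos h, if_pos (hAct.mp h)]
      simp [hI, hF, hM]
    · rw [if_neg h, if_neg (fun hc => h (hAct.mpr hc))]
      simp
  · intro p _ hp
    by_cases h : Activated L w p.1 p.2
    · rw [if_pos h]
      by_cases h1 : p.1 = q₀
      · have h2 : p.2 ≠ q₀ := fun h2 => hp (Prod.ext h1 h2)
        simp [hF, h2]
      · simp [hI, h1]
    · exact if_neg h
  · intro h; exact absurd (Finset.mem_univ _) h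
end

section
/- For every weighted automaton 𝒜 over A and S there exist a finite index set K, scalars l_k, r_k ∈ S for k ∈ K, and automata 𝒜_k for k ∈ K, each of which is either a loopback automaton or a loopback-with-prelude automaton, such that the diverging behavior of 𝒜 equals Σ_{k∈K} l_k·p_k·r_k pointwise, where p_k is the diverging behavior of 𝒜_k (that is, 𝒜(w,n) = Σ_{k∈K} l_k·𝒜_k(w,n)·r_k for every infinite word w and every n ∈ ℕ). -/
open scoped Classical

variable {A S : Type} [Semiring S]

/-!
Expanding the definition, `𝒜(w,n) = Σ_{i,f} I(i) · e_{i,f}(w,n) · F(f)` where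
`e_{i,f}(w,n)` is `M(w[0..n))_{i,f}` if `(i,f)` is activated by `w` and `0` otherwise.
Each `e_{i,f}` is the diverging behavior of a single automaton with the transitions of `𝒜`:
for `i = f` make `i` the loopback state; for `i ≠ f` add a fresh initial state with the
outgoing edges of `i` and no incoming edges, and make `f` final. (For `i = f` the fresh state
would lose the empty-word entry `M(ε)_{i,i} = 1`.)
-/

noncomputable def divEntry (𝒜 : WA A S) (w : ℕ → A) (i f : 𝒜.Q) (n : ℕ) : S :=
  if Activated 𝒜 w i f then Mword 𝒜 (wpre w n) i f else 0

lemma divB_eq_sum_divEntry (𝒜 : WA A S) (w : ℕ → A) (n : ℕ) :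
    divB 𝒜 w n = ∑ p : 𝒜.Q × 𝒜.Q, 𝒜.I p.1 * divEntry 𝒜 w p.1 p.2 n * 𝒜.F p.2 := by
  unfold divB divEntry
  simp only [mul_ite, ite_mul, mul_zero, zero_mul]

lemma divB_eq_divEntry_of_indicator (𝒜 : WA A S) (qI qF : 𝒜.Q)
    (hI : ∀ i, 𝒜.I i = if i = qI then 1 else 0) (hF : ∀ f, 𝒜.F f = if f = qF then 1 else 0)
    (w : ℕ → A) (n : ℕ) :
    divB 𝒜 w n = divEntry 𝒜 w qI qF n := by
  simp [divB_eq_sum_divEntry, hI, hF, Fintype.sum_prod_type]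

lemma Mword_cons (𝒜 : WA A S) (a : A) (w : List A) :
    Mword 𝒜 (a :: w) = 𝒜.M a * Mword 𝒜 w := by
  simp [Mword]

def loopbackWA (𝒜 : WA A S) (q : 𝒜.Q) : WA A S where
  Q := 𝒜.Q
  I := fun p => if p = q then 1 else 0
  F := fun p => if p = q then 1 else 0
  M := 𝒜.M

def preludeWA (𝒜 : WA A S) (i f : 𝒜.Q) : WA A S where
  Q := 𝒜.Q ⊕ Unit
  I := Sum.elim 0 1
  F := Sum.elim (fun q => if q = f then 1 else 0) 0
  M := fun a => Matrix.fromBlocks (𝒜.M a) 0 (Matrix.of fun _ q => 𝒜.M a i q) 0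

lemma preludeWA_M (𝒜 : WA A S) (i f : 𝒜.Q) (a : A) :
    (preludeWA 𝒜 i f).M a = Matrix.fromBlocks (𝒜.M a) 0 (Matrix.of fun _ q => 𝒜.M a i q) 0 :=
  rfl

lemma isLoopback_loopbackWA (𝒜 : WA A S) (q : 𝒜.Q) : IsLoopback (loopbackWA 𝒜 q) :=
  ⟨q, fun _ => rfl, fun _ => rfl⟩

lemma divB_loopbackWA (𝒜 : WA A S) (q : 𝒜.Q) (w : ℕ → A) (n : ℕ) :
    divB (loopbackWA 𝒜 q) w n = divEntry 𝒜 w q q n :=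
  divB_eq_divEntry_of_indicator (loopbackWA 𝒜 q) q q (fun _ => rfl) (fun _ => rfl) w n

lemma isLoopbackWithPrelude_preludeWA (𝒜 : WA A S) (i f : 𝒜.Q) :
    IsLoopbackWithPrelude (preludeWA 𝒜 i f) :=
  ⟨Sum.inr (), Sum.inl f, Sum.inr_ne_inl,
    fun p => by rcases p with _ | _ <;> simp [preludeWA],
    fun p => by rcases p with _ | _ <;> simp [preludeWA],
    fun _ p => by rcases p with _ | _ <;> rfl⟩

lemma Mword_preludeWA_inl_inl (𝒜 : WA A S) (i f : 𝒜.Q) (w : List A) (p q : 𝒜.Q) :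
    Mword (preludeWA 𝒜 i f) w (Sum.inl p) (Sum.inl q) = Mword 𝒜 w p q := by
  induction w generalizing p with
  | nil => exact (Matrix.one_apply (n := 𝒜.Q ⊕ Unit)).trans (by simp [Mword, Matrix.one_apply])
  | cons a w ih =>
    rw [Mword_cons, Mword_cons]
    erw [Matrix.mul_apply, Matrix.mul_apply, Fintype.sum_sum_type]
    simp [preludeWA_M, ih]

lemma Mword_preludeWA_inr_inl (𝒜 : WA A S) {i f : 𝒜.Q} (hif : i ≠ f) (w : List A) :
    Mword (preludeWA 𝒜 i f) w (Sum.inr ()) (Sum.inl f) = Mword 𝒜 w i f := by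
  cases w with
  | nil => exact (Matrix.one_apply (n := 𝒜.Q ⊕ Unit)).trans (by simp [Mword, hif])
  | cons a w =>
    rw [Mword_cons, Mword_cons]
    erw [Matrix.mul_apply, Matrix.mul_apply, Fintype.sum_sum_type]
    simp [preludeWA_M, Mword_preludeWA_inl_inl]

lemma divB_preludeWA (𝒜 : WA A S) {i f : 𝒜.Q} (hif : i ≠ f) (w : ℕ → A) (n : ℕ) :
    divB (preludeWA 𝒜 i f) w n = divEntry 𝒜 w i f n := by
  rw [divB_eq_divEntry_of_indicator _ (Sum.inr ()) (Sum.inl f)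
    (fun p => by rcases p with _ | _ <;> simp [preludeWA])
    (fun p => by rcases p with _ | _ <;> simp [preludeWA])]
  have hActivated :
      Activated (preludeWA 𝒜 i f) w (Sum.inr ()) (Sum.inl f) ↔ Activated 𝒜 w i f := by
    simp only [Activated, Mword_preludeWA_inr_inl 𝒜 hif]
  simp only [divEntry, hActivated, Mword_preludeWA_inr_inl 𝒜 hif]

def entryWA (𝒜 : WA A S) (p : 𝒜.Q × 𝒜.Q) : WA A S :=
  if p.1 = p.2 then loopbackWA 𝒜 p.1 else preludeWA 𝒜 p.1 p.2

lemma isLoopback_or_isLoopbackWithPrelude_entryWA (𝒜 : WA A S) (p : 𝒜.Q × 𝒜.Q) :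
    IsLoopback (entryWA 𝒜 p) ∨ IsLoopbackWithPrelude (entryWA 𝒜 p) := by
  unfold entryWA
  split_ifs
  · exact .inl (isLoopback_loopbackWA 𝒜 _)
  · exact .inr (isLoopbackWithPrelude_preludeWA 𝒜 _ _)

lemma divB_entryWA (𝒜 : WA A S) (p : 𝒜.Q × 𝒜.Q) (w : ℕ → A) (n : ℕ) :
    divB (entryWA 𝒜 p) w n = divEntry 𝒜 w p.1 p.2 n := by
  unfold entryWA
  split_ifs with h
  · rw [divB_loopbackWA, ← h]
  · exact divB_preludeWA 𝒜 h w n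

/-- every automaton decomposes (for its diverging behavior) into
a weighted sum of loopback automata with or without prelude. -/
theorem decompose_into_loopback_with_or_without_prelude (A S : Type)
    [Semiring S] (𝒜 : WA A S) :
    ∃ (k : ℕ) (l r : Fin k → S) (B : Fin k → WA A S),
      (∀ i, IsLoopback (B i) ∨ IsLoopbackWithPrelude (B i)) ∧
      ∀ (w : ℕ → A) (n : ℕ),
        divB 𝒜 w n = ∑ i, l i * divB (B i) w n * r i := by
  let e := (Fintype.equivFin (𝒜.Q × 𝒜.Q)).symm
  refine ⟨_, fun j => 𝒜.I (e j).1, fun j => 𝒜.F (e j).2, fun j => entryWA 𝒜 (e j),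
    fun j => isLoopback_or_isLoopbackWithPrelude_entryWA 𝒜 (e j), fun w n => ?_⟩
  rw [divB_eq_sum_divEntry]
  simp only [divB_entryWA]
  exact (e.sum_comp fun p => 𝒜.I p.1 * divEntry 𝒜 w p.1 p.2 n * 𝒜.F p.2).symm
end

section
/- Let L be a loopback automaton over A and S whose converging behavior equals s* for some proper converging power series s. Then the bidiverging behavior of L equals s^ζ: for every biinfinite word w, every i ∈ ℤ and every n ∈ ℕ, L(w,i,n) = s*(w[i..i+n))·χ_ζ(w,s*). -/
open scoped Classical

variable {A S : Type} [Semiring S]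

/-- a loopback automaton whose converging behavior is `s*` has
bidiverging behavior `s^ζ`. -/
theorem loopback_bdivB_eq_zeta (A S : Type) [Semiring S] (L : WA A S)
    (hL : IsLoopback L) (s : List A → S) (hs : s [] = 0)
    (hB : ∀ w : List A, convB L w = cstar s w) :
    ∀ (w : ℤ → A) (i : ℤ) (n : ℕ),
      bdivB L w i n = cstar s (bpre w i (i + n)) * chiZ w (cstar s) := by
  obtain ⟨q₀, hI, hF⟩ := hL
  have key : ∀ w : List A, Mword L w q₀ q₀ = cstar s w := by
    intro w
    have h := hB w
    unfold convB at h
    rw [← h, Finset.sum_eq_single q₀]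
    · rw [Finset.sum_eq_single q₀]
      · simp [hI, hF]
      · intro f _ hf; simp [hF, hf]
      · simp
    · intro i _ hi
      rw [Finset.sum_eq_zero]
      intro f _; simp [hI, hi]
    · simp
  intro w i n
  have hiff : BActivated L w q₀ q₀ ↔
      (∀ i₀ j₀ : ℤ, i₀ ≤ j₀ → ∃ i ≤ i₀, ∃ j, j₀ ≤ j ∧ cstar s (bpre w i j) ≠ 0) := by
    unfold BActivated
    simp only [key]
  unfold bdivB chiZ
  rw [Finset.sum_eq_single (q₀, q₀)]
  · by_cases h : BActivated L w q₀ q₀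
    · rw [if_pos h, if_pos (hiff.mp h)]
      simp [hI, hF, key]
    · rw [if_neg h, if_neg (fun hc => h (hiff.mpr hc))]
      simp
  · rintro ⟨p1, p2⟩ _ hp
    by_cases h1 : p1 = q₀
    · have h2 : p2 ≠ q₀ := fun h2 => hp (by simp [h1, h2])
      simp [hF, h2]
    · simp [hI, h1]
  · simp
end

section
/- For every weighted automaton 𝒜 over A and S there exist a finite index set K, scalars l_k, r_k ∈ S for k ∈ K, and automata 𝒜_k for k ∈ K, each of which is either a bridge automaton or a loopback automaton, such that the bidiverging behavior of 𝒜 equals Σ_{k∈K} l_k·p_k·r_k pointwise, where p_k is the bidiverging behavior of 𝒜_k (that is, 𝒜(w,i,n) = Σ_{k∈K} l_k·𝒜_k(w,i,n)·r_k for every biinfinite word w, every i ∈ ℤ and every n ∈ ℕ). -/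
open scoped Classical

variable {A S : Type} [Semiring S]

/-- The single-pair automaton: same states and transitions as `𝒜`, with
initial distribution the indicator of `p` and final the indicator of `q`. -/
def pairWA (𝒜 : WA A S) (p q : 𝒜.Q) : WA A S where
  Q := 𝒜.Q
  I := fun x => if x = p then 1 else 0
  F := fun x => if x = q then 1 else 0
  M := 𝒜.M

lemma Mword_pairWA (𝒜 : WA A S) (p q : 𝒜.Q) (w : List A) :
    Mword (pairWA 𝒜 p q) w = Mword 𝒜 w := rfl

lemma BActivated_pairWA (𝒜 : WA A S) (p q : 𝒜.Q) (w : ℤ → A) (x y : 𝒜.Q) :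
    BActivated (pairWA 𝒜 p q) w x y ↔ BActivated 𝒜 w x y := Iff.rfl

lemma bdivB_pairWA (𝒜 : WA A S) (p q : 𝒜.Q) (w : ℤ → A) (i : ℤ) (n : ℕ) :
    bdivB (pairWA 𝒜 p q) w i n =
      if BActivated 𝒜 w p q then Mword 𝒜 (bpre w i (i + n)) p q else 0 := by
  show (∑ b : 𝒜.Q × 𝒜.Q,
      if BActivated 𝒜 w b.1 b.2 then
        (if b.1 = p then 1 else 0) * Mword 𝒜 (bpre w i (i + n)) b.1 b.2 *
          (if b.2 = q then 1 else 0)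
      else 0) = _
  rw [Finset.sum_eq_single ((p, q) : 𝒜.Q × 𝒜.Q)]
  · by_cases h : BActivated 𝒜 w p q <;> simp [h]
  · intro b _ hb
    have h1 : b.1 ≠ p ∨ b.2 ≠ q := by
      by_contra hc
      push_neg at hc
      exact hb (Prod.ext hc.1 hc.2)
    rcases h1 with h1 | h1 <;>
      by_cases h : BActivated 𝒜 w b.1 b.2 <;> simp [h, h1]
  · intro h
    exact absurd (Finset.mem_univ _) h

/-- every automaton decomposes (for its bidiverging behavior)
into a weighted sum of bridge automata and loopback automata. -/
theorem decompose_into_bridge_and_loopback (A S : Type) [Semiring S]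
    (𝒜 : WA A S) :
    ∃ (k : ℕ) (l r : Fin k → S) (B : Fin k → WA A S),
      (∀ i, IsBridge (B i) ∨ IsLoopback (B i)) ∧
      ∀ (w : ℤ → A) (i : ℤ) (n : ℕ),
        bdivB 𝒜 w i n = ∑ j, l j * bdivB (B j) w i n * r j := by
  classical
  let e : Fin (Fintype.card (𝒜.Q × 𝒜.Q)) ≃ (𝒜.Q × 𝒜.Q) :=
    (Fintype.equivFin _).symm
  refine ⟨Fintype.card (𝒜.Q × 𝒜.Q), fun j => 𝒜.I (e j).1, fun j => 𝒜.F (e j).2,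
    fun j => pairWA 𝒜 (e j).1 (e j).2, ?_, ?_⟩
  · intro j
    by_cases h : (e j).1 = (e j).2
    · right
      exact ⟨(e j).1, fun _ => rfl, fun f => by simp [pairWA, h]⟩
    · left
      exact ⟨(e j).1, (e j).2, h, fun _ => rfl, fun _ => rfl⟩
  · intro w i n
    calc bdivB 𝒜 w i n
        = ∑ p : 𝒜.Q × 𝒜.Q, 𝒜.I p.1 * bdivB (pairWA 𝒜 p.1 p.2) w i n * 𝒜.F p.2 := by
          simp only [bdivB_pairWA]
          unfold bdivB
          refine Finset.sum_congr rfl fun p _ => ?_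
          by_cases h : BActivated 𝒜 w p.1 p.2 <;> simp [h, mul_assoc]
      _ = _ := (Fintype.sum_equiv e _ _ fun j => rfl).symm
end
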